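/- For all real α > 0, β_1 > 0, β_2 > 0 there exists ε > 0 such that for all real γ with −ε < γ < 0 and every l ∈ {0, 1, …, k2}: J_{0, l, 0}(α+1, β_1, β_2) = J_{k1, k2, k2−l}(α, β_1+1, β_2), where J_{l_1,l_2,m}(α, β_1, β_2) denotes the integral J_{l_1,l_2,m} with the indicated values of the parameters. -/

import Mathlib

open MeasureTheory Real Finset Equiv
open scoped Classical

noncomputable section

/-- `∏_{a<b} f a b`. -/
def pairProd {k : ℕ} (f : Fin k → Fin k → ℝ) : ℝ :=
  ∏ a : Fin k, ∏ b : Fin k, if a < b then f a b else 1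

/-- The index `b + k1 − k2` in `Fin k1` (0-indexed version of the index `b+k1−k2`). -/
def shiftIdx {k1 k2 : ℕ} (h : k2 ≤ k1) (b : Fin k2) : Fin k1 :=
  ⟨(b : ℕ) + k1 - k2, by have := b.isLt; omega⟩

/-- A `M : {1,…,k2} → {1,…,k1}` as in the definition of the chain `C^{k1,k2}_γ`:
nondecreasing with `M(b) ≤ k1−k2+b` (0-indexed form). -/
def IsChainMap (k1 k2 : ℕ) (M : Fin k2 → Fin k1) : Prop :=
  Monotone M ∧ ∀ b : Fin k2, (M b : ℕ) ≤ k1 - k2 + (b : ℕ)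

/-- The index `M(b) − 1` in `Fin k1`. -/
def predIdx {k1 k2 : ℕ} (M : Fin k2 → Fin k1) (b : Fin k2) : Fin k1 :=
  ⟨(M b : ℕ) - 1, Nat.lt_of_le_of_lt (Nat.sub_le _ _) (M b).isLt⟩

/-- The region `D_M[x,y]`: `x ≤ t_{k1} ≤ … ≤ t_1 ≤ y`, `x ≤ s_{k2} ≤ … ≤ s_1 ≤ y`, and
`t_{M(b)} ≤ s_b ≤ t_{M(b)−1}` for all `b`, with `t_0 = y`. -/
def chainDomain (k1 k2 : ℕ) (M : Fin k2 → Fin k1) (x y : ℝ) :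
    Set ((Fin k1 → ℝ) × (Fin k2 → ℝ)) :=
  {p | Antitone p.1 ∧ Antitone p.2 ∧ (∀ a, x ≤ p.1 a ∧ p.1 a ≤ y) ∧
    (∀ b, x ≤ p.2 b ∧ p.2 b ≤ y) ∧
    ∀ b, p.1 (M b) ≤ p.2 b ∧ (0 < (M b : ℕ) → p.2 b ≤ p.1 (predIdx M b))}

/-- The unbounded region `D_M[0,+∞]` (with `t_0 = +∞`). -/
def chainDomainInf (k1 k2 : ℕ) (M : Fin k2 → Fin k1) :
    Set ((Fin k1 → ℝ) × (Fin k2 → ℝ)) :=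
  {p | Antitone p.1 ∧ Antitone p.2 ∧ (∀ a, 0 ≤ p.1 a) ∧ (∀ b, 0 ≤ p.2 b) ∧
    ∀ b, p.1 (M b) ≤ p.2 b ∧ (0 < (M b : ℕ) → p.2 b ≤ p.1 (predIdx M b))}

/-- The coefficient `X_{M,γ} = ∏_b sin(π(k1−k2−M(b)+b+1)γ)/sin(π(k1−k2+b)γ)`
(0-indexed form). -/
def chainCoeff (k1 k2 : ℕ) (γ : ℝ) (M : Fin k2 → Fin k1) : ℝ :=
  ∏ b : Fin k2,
    Real.sin (Real.pi * ((k1 : ℝ) - (k2 : ℝ) - ((M b : ℕ) : ℝ) + ((b : ℕ) : ℝ) + 1) * γ) /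
      Real.sin (Real.pi * ((k1 : ℝ) - (k2 : ℝ) + ((b : ℕ) : ℝ) + 1) * γ)

/-- The integral of `G` over the chain `C^{k1,k2}_γ[x,y] = Σ_M X_{M,γ} D_M[x,y]`. -/
def chainIntegral (k1 k2 : ℕ) (γ x y : ℝ)
    (G : (Fin k1 → ℝ) → (Fin k2 → ℝ) → ℝ) : ℝ :=
  ∑ M : Fin k2 → Fin k1,
    if IsChainMap k1 k2 M then
      chainCoeff k1 k2 γ M * ∫ p in chainDomain k1 k2 M x y, G p.1 p.2
    else 0

/-- The integral of `G` over the chain `C^{k1,k2}_γ[0,+∞]`. -/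
def chainIntegralInf (k1 k2 : ℕ) (γ : ℝ)
    (G : (Fin k1 → ℝ) → (Fin k2 → ℝ) → ℝ) : ℝ :=
  ∑ M : Fin k2 → Fin k1,
    if IsChainMap k1 k2 M then
      chainCoeff k1 k2 γ M * ∫ p in chainDomainInf k1 k2 M, G p.1 p.2
    else 0

/-- The weight function `g(t;s) = Sym_t Sym_s ∏_b 1/(s_b − t_b)`. -/
def wtG (k1 k2 : ℕ) (h : k2 ≤ k1) (t : Fin k1 → ℝ) (s : Fin k2 → ℝ) : ℝ :=
  ((Nat.factorial k1 : ℝ) * (Nat.factorial k2 : ℝ))⁻¹ *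
    ∑ σ : Equiv.Perm (Fin k1), ∑ τ : Equiv.Perm (Fin k2),
      ∏ b : Fin k2, (s (τ b) - t (σ (Fin.castLE h b)))⁻¹

/-- The master function `Ω(t;s;α,β₁,β₂)`. -/
def masterOmega (k1 k2 : ℕ) (γ α β1 β2 : ℝ) (t : Fin k1 → ℝ) (s : Fin k2 → ℝ) : ℝ :=
  (∏ a : Fin k1, t a ^ (α - 1) * (1 - t a) ^ (β1 - 1)) *
    (∏ b : Fin k2, (1 - s b) ^ (β2 - 1)) *
    (∏ a : Fin k1, ∏ b : Fin k2, |t a - s b| ^ (-γ)) *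
    pairProd (fun a b => (t a - t b) ^ (2 * γ)) *
    pairProd (fun a b => (s a - s b) ^ (2 * γ))

/-- A triple `(l₁,l₂,m)` is admissible if `l₁ ≤ k1−k2+l₂`, `l₂ ≤ k2`, `m ≤ min(l₁,l₂)`. -/
def Admissible (k1 k2 l1 l2 m : ℕ) : Prop :=
  l1 ≤ k1 - k2 + l2 ∧ l2 ≤ k2 ∧ m ≤ min l1 l2

/-- The function `h_{l₁,l₂,m}(t;s)`. -/
def hFun (k1 k2 : ℕ) (h : k2 ≤ k1) (l1 l2 m : ℕ)
    (t : Fin k1 → ℝ) (s : Fin k2 → ℝ) : ℝ :=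
  ((Nat.factorial k1 : ℝ) * (Nat.factorial k2 : ℝ))⁻¹ *
    ∑ σ : Equiv.Perm (Fin k1), ∑ τ : Equiv.Perm (Fin k2),
      (∏ a : Fin k1, if (a : ℕ) < l1 then t (σ a) else 1 - t (σ a)) *
        ∏ b : Fin k2,
          if (b : ℕ) < m then (1 - s (τ b)) / (s (τ b) - t (σ (Fin.castLE h b)))
          else if l2 ≤ (b : ℕ) then (1 - s (τ b)) / (s (τ b) - t (σ (shiftIdx h b)))
          else 1

/-- The function `h̃_{l₁,l₂,m}(t;s)`. -/
def hTilde (k1 k2 : ℕ) (h : k2 ≤ k1) (l1 l2 m : ℕ)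
    (t : Fin k1 → ℝ) (s : Fin k2 → ℝ) : ℝ :=
  ((Nat.factorial k1 : ℝ) * (Nat.factorial k2 : ℝ))⁻¹ *
    ∑ σ : Equiv.Perm (Fin k1), ∑ τ : Equiv.Perm (Fin k2),
      (∏ a : Fin k1, if (a : ℕ) < l1 then t (σ a) else 1 - t (σ a)) *
        ∏ b : Fin k2,
          if (b : ℕ) < m then (1 - t (σ (Fin.castLE h b))) / (s (τ b) - t (σ (Fin.castLE h b)))
          else if l2 ≤ (b : ℕ) then (1 - s (τ b)) / (s (τ b) - t (σ (shiftIdx h b)))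
          else 1

/-- The integral `J_{l₁,l₂,m}(α,β₁,β₂) = ∫_{C^{k1,k2}_γ[0,1]} Ω · h_{l₁,l₂,m}`. -/
def Jint (k1 k2 : ℕ) (h : k2 ≤ k1) (γ α β1 β2 : ℝ) (l1 l2 m : ℕ) : ℝ :=
  chainIntegral k1 k2 γ 0 1
    (fun t s => masterOmega k1 k2 γ α β1 β2 t s * hFun k1 k2 h l1 l2 m t s)

/-- The integral `J̃_{l₁,l₂,m}(α,β₁,β₂) = ∫_{C^{k1,k2}_γ[0,1]} Ω · h̃_{l₁,l₂,m}`. -/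
def JintTilde (k1 k2 : ℕ) (h : k2 ≤ k1) (γ α β1 β2 : ℝ) (l1 l2 m : ℕ) : ℝ :=
  chainIntegral k1 k2 γ 0 1
    (fun t s => masterOmega k1 k2 γ α β1 β2 t s * hTilde k1 k2 h l1 l2 m t s)


private lemma rpow_step (x : ℝ) {y : ℝ} (hy : y ≠ 0) : x ^ y = x ^ (y - 1) * x := by
  rcases eq_or_ne x 0 with rfl | hx
  · rw [Real.zero_rpow hy, mul_zero]
  · rw [show y = y - 1 + 1 by ring, Real.rpow_add_one hx]
    ring_nf

open Fin.NatCast Fin.CommRing in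
private lemma rot_eq (n : ℕ) : ∀ (m : ℕ) (i : Fin (n + 1)),
    ((finRotate (n + 1)) ^ m) i = i + (m : Fin (n + 1)) := by
  intro m
  induction m with
  | zero => intro i; simp
  | succ m ih =>
    intro i
    rw [pow_succ, Equiv.Perm.mul_apply, ih, finRotate_succ_apply]
    push_cast
    ring

open Fin.NatCast Fin.CommRing in
private lemma rot_val (n m : ℕ) (i : Fin n) :
    (((finRotate n) ^ m) i : ℕ) = ((i : ℕ) + m) % n := by
  rcases n with _ | n
  · exact i.elim0
  · rw [rot_eq, Fin.val_add, Fin.val_natCast, Nat.add_mod_mod]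

private lemma omega_alpha (k1 k2 : ℕ) (γ α β1 β2 : ℝ) (hα : α ≠ 0)
    (t : Fin k1 → ℝ) (s : Fin k2 → ℝ) :
    masterOmega k1 k2 γ (α + 1) β1 β2 t s
      = (∏ a, t a) * masterOmega k1 k2 γ α β1 β2 t s := by
  unfold masterOmega
  have key : (∏ a : Fin k1, t a ^ (α + 1 - 1) * (1 - t a) ^ (β1 - 1))
      = (∏ a, t a) * ∏ a : Fin k1, t a ^ (α - 1) * (1 - t a) ^ (β1 - 1) := by
    rw [← Finset.prod_mul_distrib]
    refine Finset.prod_congr rfl fun a _ => ?_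
    rw [show α + 1 - 1 = α by ring, rpow_step (t a) hα]
    ring
  rw [key]; ring

private lemma omega_beta (k1 k2 : ℕ) (γ α β1 β2 : ℝ) (hβ : β1 ≠ 0)
    (t : Fin k1 → ℝ) (s : Fin k2 → ℝ) :
    masterOmega k1 k2 γ α (β1 + 1) β2 t s
      = (∏ a, (1 - t a)) * masterOmega k1 k2 γ α β1 β2 t s := by
  unfold masterOmega
  have key : (∏ a : Fin k1, t a ^ (α - 1) * (1 - t a) ^ (β1 + 1 - 1))
      = (∏ a, (1 - t a)) * ∏ a : Fin k1, t a ^ (α - 1) * (1 - t a) ^ (β1 - 1) := by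
    rw [← Finset.prod_mul_distrib]
    refine Finset.prod_congr rfl fun a _ => ?_
    rw [show β1 + 1 - 1 = β1 by ring, rpow_step (1 - t a) hβ]
    ring
  rw [key]; ring

private lemma hkey (k1 k2 : ℕ) (h : k2 ≤ k1) (l : ℕ) (hl : l ≤ k2)
    (t : Fin k1 → ℝ) (s : Fin k2 → ℝ) :
    (∏ a, t a) * hFun k1 k2 h 0 l 0 t s
      = (∏ a, (1 - t a)) * hFun k1 k2 h k1 k2 (k2 - l) t s := by
  set ρ1 : Equiv.Perm (Fin k1) := (finRotate k1) ^ (l + (k1 - k2)) with hρ1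
  set ρ2 : Equiv.Perm (Fin k2) := (finRotate k2) ^ l with hρ2
  unfold hFun
  rw [mul_left_comm, mul_left_comm (∏ a, (1 - t a))]
  congr 1
  simp only [Finset.mul_sum]
  refine Fintype.sum_equiv (Equiv.mulRight ρ1) _ _ fun σ => ?_
  refine Fintype.sum_equiv (Equiv.mulRight ρ2) _ _ fun τ => ?_
  simp only [Equiv.coe_mulRight, Equiv.Perm.mul_apply]
  have e1 : (∏ a : Fin k1, if (a : ℕ) < 0 then t (σ a) else 1 - t (σ a))
      = ∏ a : Fin k1, (1 - t (σ a)) :=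
    Finset.prod_congr rfl fun a _ => if_neg (by omega)
  have e2 : (∏ a : Fin k1, if (a : ℕ) < k1 then t (σ (ρ1 a)) else 1 - t (σ (ρ1 a)))
      = ∏ a : Fin k1, t (σ (ρ1 a)) :=
    Finset.prod_congr rfl fun a _ => if_pos a.isLt
  have e3 : (∏ a : Fin k1, t (σ (ρ1 a))) = ∏ a, t a := by
    rw [show (∏ a : Fin k1, t (σ (ρ1 a))) = ∏ a : Fin k1, t ((σ * ρ1) a) from rfl]
    exact Equiv.prod_comp (σ * ρ1) t
  have e4 : (∏ a : Fin k1, (1 - t (σ a))) = ∏ a, (1 - t a) :=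
    Equiv.prod_comp σ (fun x => 1 - t x)
  have e5 : (∏ b : Fin k2,
        if (b : ℕ) < k2 - l then (1 - s (τ (ρ2 b))) / (s (τ (ρ2 b)) - t (σ (ρ1 (Fin.castLE h b))))
        else if k2 ≤ (b : ℕ) then (1 - s (τ (ρ2 b))) / (s (τ (ρ2 b)) - t (σ (ρ1 (shiftIdx h b))))
        else 1)
      = ∏ b : Fin k2,
        if (b : ℕ) < 0 then (1 - s (τ b)) / (s (τ b) - t (σ (Fin.castLE h b)))
        else if l ≤ (b : ℕ) then (1 - s (τ b)) / (s (τ b) - t (σ (shiftIdx h b)))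
        else 1 := by
    rw [← Equiv.prod_comp ρ2 (fun c : Fin k2 =>
      if (c : ℕ) < 0 then (1 - s (τ c)) / (s (τ c) - t (σ (Fin.castLE h c)))
      else if l ≤ (c : ℕ) then (1 - s (τ c)) / (s (τ c) - t (σ (shiftIdx h c)))
      else 1)]
    refine Finset.prod_congr rfl fun b _ => ?_
    have hk2 : 0 < k2 := b.pos
    have hv : ((ρ2 b : Fin k2) : ℕ) = ((b : ℕ) + l) % k2 := rot_val k2 l b
    by_cases hb : (b : ℕ) < k2 - l
    · have hv' : ((ρ2 b : Fin k2) : ℕ) = (b : ℕ) + l := by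
        rw [hv]; exact Nat.mod_eq_of_lt (by omega)
      have hidx : ρ1 (Fin.castLE h b) = shiftIdx h (ρ2 b) := by
        apply Fin.ext
        have hr := rot_val k1 (l + (k1 - k2)) (Fin.castLE h b)
        simp only [Fin.coe_castLE] at hr
        have hlt : (b : ℕ) + (l + (k1 - k2)) < k1 := by omega
        rw [hr, Nat.mod_eq_of_lt hlt]
        show (b : ℕ) + (l + (k1 - k2)) = ((ρ2 b : Fin k2) : ℕ) + k1 - k2
        rw [hv']; omega
      rw [if_pos hb, if_neg (show ¬ ((ρ2 b : Fin k2) : ℕ) < 0 by omega),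
        if_pos (show l ≤ ((ρ2 b : Fin k2) : ℕ) by omega), hidx]
    · have hv' : ((ρ2 b : Fin k2) : ℕ) = (b : ℕ) + l - k2 := by
        rw [hv, Nat.mod_eq_sub_mod (by omega), Nat.mod_eq_of_lt (by omega)]
      rw [if_neg hb, if_neg (show ¬ k2 ≤ (b : ℕ) from Nat.not_le.2 b.isLt),
        if_neg (show ¬ ((ρ2 b : Fin k2) : ℕ) < 0 by omega),
        if_neg (show ¬ l ≤ ((ρ2 b : Fin k2) : ℕ) by omega)]
  rw [e1, e2, e3, e4, e5]
  ring

/-- The identity `J_{0,l,0}(α+1,β₁,β₂) = J_{k1,k2,k2−l}(α,β₁+1,β₂)`. -/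
theorem J_shift_identity (k1 k2 : ℕ) (h : k2 ≤ k1) (α β1 β2 : ℝ)
    (hα : 0 < α) (hβ1 : 0 < β1) (hβ2 : 0 < β2) :
    ∃ ε > 0, ∀ γ : ℝ, -ε < γ → γ < 0 →
      ∀ l : ℕ, l ≤ k2 →
        Jint k1 k2 h γ (α + 1) β1 β2 0 l 0 =
          Jint k1 k2 h γ α (β1 + 1) β2 k1 k2 (k2 - l) := by
  refine ⟨1, one_pos, fun γ _ _ l hl => ?_⟩
  unfold Jint
  congr 1
  funext t s
  rw [omega_alpha k1 k2 γ α β1 β2 (ne_of_gt hα) t s,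
    omega_beta k1 k2 γ α β1 β2 (ne_of_gt hβ1) t s]
  have hk := hkey k1 k2 h l hl t s
  calc ((∏ a, t a) * masterOmega k1 k2 γ α β1 β2 t s) * hFun k1 k2 h 0 l 0 t s
      = masterOmega k1 k2 γ α β1 β2 t s * ((∏ a, t a) * hFun k1 k2 h 0 l 0 t s) := by ring
    _ = masterOmega k1 k2 γ α β1 β2 t s
        * ((∏ a, (1 - t a)) * hFun k1 k2 h k1 k2 (k2 - l) t s) := by rw [hk]
    _ = ((∏ a, (1 - t a)) * masterOmega k1 k2 γ α β1 β2 t s)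
        * hFun k1 k2 h k1 k2 (k2 - l) t s := by ring

end
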